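/- arXiv:2512.22552 — 2 statements merged into one kernel-verified Lean document; each statement's English description precedes it below -/
import Mathlib

section
/- In the consensus-reachable case with the egoistic property and ‖z_B‖ ≤ 1, ‖Q‖ ≤ 2, the payoff at r_A = 1 is at least the payoff at r_A = 0: R_A(1) − R_A(0) = (1/2)‖Q_A‖cos(θ_A) + (1/4)‖Q‖‖Q_A‖cos(ρ_A − θ_A)cos(θ_A) − (1/4)(z_B^T Q)‖Q_A‖cos(θ_A) − (1/4)(z_B^T Q_A)‖Q‖cos(ρ_A − θ_A) ≥ 0. -/
/-!
With `a = ‖Q_A‖ cos θ_A` and `b = ‖Q‖ cos (ρ_A - θ_A)`, both nonnegative since the angles lie in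
`[0, π/2]`, the gap equals `(a/4)(2 - z_Bᵀ Q) + (b/4)(a - z_Bᵀ Q_A)`. Cauchy–Schwarz gives
`z_Bᵀ Q ≤ 2` and the egoistic property gives `z_Bᵀ Q_A ≤ a`, so both summands are nonnegative.
-/

theorem real_inner_le_mul_of_norm_le {E : Type*} [NormedAddCommGroup E] [InnerProductSpace ℝ E]
    {x y : E} {c d : ℝ} (hx : ‖x‖ ≤ c) (hy : ‖y‖ ≤ d) : inner ℝ x y ≤ c * d :=
  (real_inner_le_norm x y).trans (mul_le_mul hx hy (norm_nonneg y) ((norm_nonneg x).trans hx))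

theorem half_add_quarter_mul_sub_nonneg {a b s t : ℝ} (ha : 0 ≤ a) (hb : 0 ≤ b)
    (hs : s ≤ 2) (ht : t ≤ a) : 0 ≤ a / 2 + a * b / 4 - s * a / 4 - t * b / 4 := by
  have split : a / 2 + a * b / 4 - s * a / 4 - t * b / 4 = a * (2 - s) / 4 + b * (a - t) / 4 := by
    ring
  rw [split]
  have := mul_nonneg ha (sub_nonneg.2 hs)
  have := mul_nonneg hb (sub_nonneg.2 ht)
  linarith

/-- Consensus-reachable case: with the egoistic property, `‖z_B‖ ≤ 1`, `‖Q‖ ≤ 2`,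
`θ_A ∈ [0, ρ_A]` and `ρ_A ≤ π/2`, the payoff gap between `r_A = 1` and `r_A = 0`,
`(1/2)‖Q_A‖cos θ_A + (1/4)‖Q‖‖Q_A‖cos(ρ_A−θ_A)cos θ_A − (1/4)(z_B^T Q)‖Q_A‖cos θ_A
 − (1/4)(z_B^T Q_A)‖Q‖cos(ρ_A−θ_A)`, is nonnegative. -/
theorem payoff_gap_r_one_vs_zero {k : ℕ}
    (zB Q QA : EuclideanSpace ℝ (Fin k)) (θA ρA : ℝ)
    (hθA : θA ∈ Set.Icc 0 ρA) (hρA : ρA ≤ Real.pi / 2)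
    (hzB : ‖zB‖ ≤ 1) (hQ : ‖Q‖ ≤ 2)
    (hego : (inner ℝ zB QA : ℝ) ≤ ‖QA‖ * Real.cos θA) :
    0 ≤ (1/2) * ‖QA‖ * Real.cos θA
        + (1/4) * ‖Q‖ * ‖QA‖ * Real.cos (ρA - θA) * Real.cos θA
        - (1/4) * (inner ℝ zB Q : ℝ) * ‖QA‖ * Real.cos θA
        - (1/4) * (inner ℝ zB QA : ℝ) * ‖Q‖ * Real.cos (ρA - θA) := by
  obtain ⟨hθ0, hθρ⟩ := hθA
  have hcos : 0 ≤ Real.cos θA :=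
    Real.cos_nonneg_of_mem_Icc ⟨by linarith [Real.pi_pos], by linarith⟩
  have hcos' : 0 ≤ Real.cos (ρA - θA) :=
    Real.cos_nonneg_of_mem_Icc ⟨by linarith [Real.pi_pos], by linarith⟩
  have hinner : inner ℝ zB Q ≤ 2 := by
    simpa using real_inner_le_mul_of_norm_le hzB hQ
  have := half_add_quarter_mul_sub_nonneg (mul_nonneg (norm_nonneg QA) hcos)
    (mul_nonneg (norm_nonneg Q) hcos') hinner hego
  linarith
end

section
/- Under the consensus-reachable assumption (ρ_A ≤ π/2), fixing r_A = r_B = 1, the function R_A(θ_A) = p(θ_A)·‖Q_A‖cos(θ_A) + (1 − p(θ_A))·‖Q_A‖·c₄ is concave on θ_A ∈ [0, ρ_A], where p(θ_A) = 1/2 + (‖Q‖/8)(cos(ρ_A − θ_A) − c₃), provided the egoistic property cos(θ_A) ≥ c₄ holds throughout; specifically its second derivative p''(θ_A)(‖Q_A‖cos(θ_A) − ‖Q_A‖c₄) − 2p'(θ_A)‖Q_A‖sin(θ_A) − p(θ_A)‖Q_A‖cos(θ_A) is ≤ 0. -/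
/-- Winning probability as a function of the angle `θ_A`. -/
noncomputable def pAθ (nQ ρA c3 θ : ℝ) : ℝ :=
  1/2 + (nQ / 8) * (Real.cos (ρA - θ) - c3)

/-- Payoff of party A as a function of `θ_A` with `r_A = r_B = 1`. -/
noncomputable def RAθ (nQA nQ ρA c3 c4 θ : ℝ) : ℝ :=
  pAθ nQ ρA c3 θ * (nQA * Real.cos θ) + (1 - pAθ nQ ρA c3 θ) * (nQA * c4)

/-! `R_A = ‖Q_A‖ c₄ + p · ‖Q_A‖ (cos θ − c₄)`, so
`R_A'' = p'' · ‖Q_A‖ (cos θ − c₄) − 2 p' ‖Q_A‖ sin θ − p ‖Q_A‖ cos θ`.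
On `[0, ρ_A] ⊆ [0, π/2]` both `θ` and `ρ_A − θ` are acute, so `p'' ≤ 0 ≤ p'`, `p ≥ 0` and
`sin θ, cos θ ≥ 0`; with the egoistic property `cos θ ≥ c₄` every term is `≤ 0`. -/

open Real Set

lemma concaveOn_of_hasDerivAt2_nonpos {D : Set ℝ} (hD : Convex ℝ D) {f f' f'' : ℝ → ℝ}
    (hf : ∀ x, HasDerivAt f (f' x) x) (hf' : ∀ x, HasDerivAt f' (f'' x) x)
    (hf'' : ∀ x ∈ D, f'' x ≤ 0) : ConcaveOn ℝ D f :=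
  concaveOn_of_hasDerivWithinAt2_nonpos hD
    (fun x _ => (hf x).continuousAt.continuousWithinAt)
    (fun x _ => (hf x).hasDerivWithinAt) (fun x _ => (hf' x).hasDerivWithinAt)
    (fun x hx => hf'' x (interior_subset hx))

section Derivatives

variable (nQA nQ ρA c3 c4 : ℝ)

lemma hasDerivAt_pAθ (θ : ℝ) :
    HasDerivAt (pAθ nQ ρA c3) (nQ / 8 * sin (ρA - θ)) θ :=
  ((((hasDerivAt_id θ).const_sub ρA).cos.sub_const c3).const_mul (nQ / 8)).const_add (1 / 2 : ℝ)
    |>.congr_deriv (by simp)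

lemma hasDerivAt_deriv_pAθ (θ : ℝ) :
    HasDerivAt (fun x => nQ / 8 * sin (ρA - x)) (-(nQ / 8) * cos (ρA - θ)) θ :=
  (((hasDerivAt_id θ).const_sub ρA).sin.const_mul (nQ / 8)).congr_deriv (by simp)

lemma RAθ_eq_add_mul :
    RAθ nQA nQ ρA c3 c4 = fun θ => nQA * c4 + pAθ nQ ρA c3 θ * (nQA * cos θ - nQA * c4) := by
  funext θ
  unfold RAθ
  ring

lemma hasDerivAt_RAθ (θ : ℝ) :
    HasDerivAt (RAθ nQA nQ ρA c3 c4)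
      (nQ / 8 * sin (ρA - θ) * (nQA * cos θ - nQA * c4) + pAθ nQ ρA c3 θ * (nQA * -sin θ)) θ := by
  rw [RAθ_eq_add_mul]
  exact ((hasDerivAt_pAθ nQ ρA c3 θ).fun_mul
    (((hasDerivAt_cos θ).const_mul nQA).sub_const (nQA * c4))).const_add (nQA * c4) |>.congr_deriv
    (by ring)

lemma hasDerivAt_deriv_RAθ (θ : ℝ) :
    HasDerivAt
      (fun x => nQ / 8 * sin (ρA - x) * (nQA * cos x - nQA * c4) + pAθ nQ ρA c3 x * (nQA * -sin x))
      (-(nQ / 8) * cos (ρA - θ) * (nQA * cos θ - nQA * c4)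
        - 2 * (nQ / 8 * sin (ρA - θ)) * (nQA * sin θ)
        - pAθ nQ ρA c3 θ * (nQA * cos θ)) θ := by
  have hg := ((hasDerivAt_cos θ).const_mul nQA).sub_const (nQA * c4)
  have hg' := (hasDerivAt_sin θ).fun_neg.const_mul nQA
  exact (((hasDerivAt_deriv_pAθ nQ ρA θ).fun_mul hg).fun_add
    ((hasDerivAt_pAθ nQ ρA c3 θ).fun_mul hg')).congr_deriv (by ring)

end Derivatives

lemma pAθ_nonneg {nQ c3 : ℝ} (hnQ : nQ ∈ Icc (0 : ℝ) 2) (hc3 : c3 ≤ 1) (ρA θ : ℝ) :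
    0 ≤ pAθ nQ ρA c3 θ := by
  unfold pAθ
  nlinarith [neg_one_le_cos (ρA - θ), hnQ.1, hnQ.2]

lemma second_deriv_RAθ_nonpos {nQA nQ ρA c3 c4 θ : ℝ} (hnQA : 0 ≤ nQA) (hnQ : nQ ∈ Icc (0 : ℝ) 2)
    (hρA : ρA ≤ π / 2) (hc3 : c3 ≤ 1) (hθ : θ ∈ Icc 0 ρA) (hego : c4 ≤ cos θ) :
    -(nQ / 8) * cos (ρA - θ) * (nQA * cos θ - nQA * c4)
      - 2 * (nQ / 8 * sin (ρA - θ)) * (nQA * sin θ)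
      - pAθ nQ ρA c3 θ * (nQA * cos θ) ≤ 0 := by
  obtain ⟨hθ0, hθρ⟩ := hθ
  have hπ := pi_pos
  have hcos : 0 ≤ cos θ := cos_nonneg_of_mem_Icc ⟨by linarith, by linarith⟩
  have hsin : 0 ≤ sin θ := sin_nonneg_of_nonneg_of_le_pi hθ0 (by linarith)
  have hcos' : 0 ≤ cos (ρA - θ) := cos_nonneg_of_mem_Icc ⟨by linarith, by linarith⟩
  have hsin' : 0 ≤ sin (ρA - θ) := sin_nonneg_of_nonneg_of_le_pi (by linarith) (by linarith)
  have hnQ8 : 0 ≤ nQ / 8 := by linarith [hnQ.1]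
  have hg : 0 ≤ nQA * cos θ - nQA * c4 := by
    rw [← mul_sub]
    exact mul_nonneg hnQA (sub_nonneg.2 hego)
  have hp := pAθ_nonneg hnQ hc3 ρA θ
  have h₁ : 0 ≤ nQ / 8 * cos (ρA - θ) * (nQA * cos θ - nQA * c4) := by positivity
  have h₂ : 0 ≤ 2 * (nQ / 8 * sin (ρA - θ)) * (nQA * sin θ) := by positivity
  have h₃ : 0 ≤ pAθ nQ ρA c3 θ * (nQA * cos θ) := by positivity
  linarith

theorem RA_concave_in_angle_general (nQA nQ ρA c3 c4 : ℝ)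
    (hnQA : 0 ≤ nQA) (hnQ : nQ ∈ Set.Icc (0 : ℝ) 2)
    (hρA : ρA ∈ Set.Icc 0 (Real.pi / 2))
    (hc3 : c3 ∈ Set.Icc (-1 : ℝ) 1)
    (hego : ∀ θ ∈ Set.Icc 0 ρA, c4 ≤ Real.cos θ) :
    ConcaveOn ℝ (Set.Icc 0 ρA) (RAθ nQA nQ ρA c3 c4) ∧
    (∀ θ ∈ Set.Icc 0 ρA,
      (-(nQ / 8) * Real.cos (ρA - θ)) * (nQA * Real.cos θ - nQA * c4)
        - 2 * ((nQ / 8) * Real.sin (ρA - θ)) * (nQA * Real.sin θ)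
        - pAθ nQ ρA c3 θ * (nQA * Real.cos θ) ≤ 0) := by
  have second_deriv_nonpos := fun θ (hθ : θ ∈ Icc 0 ρA) =>
    second_deriv_RAθ_nonpos hnQA hnQ hρA.2 hc3.2 hθ (hego θ hθ)
  exact ⟨concaveOn_of_hasDerivAt2_nonpos (convex_Icc 0 ρA) (hasDerivAt_RAθ nQA nQ ρA c3 c4)
    (hasDerivAt_deriv_RAθ nQA nQ ρA c3 c4) second_deriv_nonpos, second_deriv_nonpos⟩

/-- Under the consensus-reachable assumption (`ρ_A ≤ π/2`), with `r_A = r_B = 1`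
and the egoistic property `cos θ_A ≥ c₄` throughout, `R_A(θ_A)` is concave on
`[0, ρ_A]`; specifically the expression
`p''(θ)(‖Q_A‖cos θ − ‖Q_A‖c₄) − 2p'(θ)‖Q_A‖sin θ − p(θ)‖Q_A‖cos θ` is `≤ 0`. -/
theorem RA_concave_in_angle (nQA nQ ρA c3 c4 : ℝ)
    (hnQA : 0 ≤ nQA) (hnQ : nQ ∈ Set.Icc (0 : ℝ) 2)
    (hρA : ρA ∈ Set.Icc 0 (Real.pi / 2))
    (hc3 : c3 ∈ Set.Icc (-1 : ℝ) 1) (hc4 : c4 ∈ Set.Icc (-1 : ℝ) 1)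
    (hego : ∀ θ ∈ Set.Icc 0 ρA, c4 ≤ Real.cos θ) :
    ConcaveOn ℝ (Set.Icc 0 ρA) (RAθ nQA nQ ρA c3 c4) ∧
    (∀ θ ∈ Set.Icc 0 ρA,
      (-(nQ / 8) * Real.cos (ρA - θ)) * (nQA * Real.cos θ - nQA * c4)
        - 2 * ((nQ / 8) * Real.sin (ρA - θ)) * (nQA * Real.sin θ)
        - pAθ nQ ρA c3 θ * (nQA * Real.cos θ) ≤ 0) :=
  RA_concave_in_angle_general nQA nQ ρA c3 c4 hnQA hnQ hρA hc3 hego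
end
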